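/- Write C^0(a) = a, C^i(a) = [C^{i-1}(a), C^{i-1}(a)] for the derived series of a Lie algebra a. Then: (i) for every i ≥ 1, C^i(G(d)) ⊆ C^i(d) ⊕ h*; (ii) if d is solvable with C^k(d) = 0, then C^{k+1}(G(d)) = 0, so G(d) is solvable of step at most k+1; (iii) under the hypothesis C^k(d) = 0, one has C^k(G(d)) = 0 if and only if ⟨π(h)x, y⟩_d = 0 for all h ∈ h and all x,y ∈ C^{k-1}(d). -/

import Mathlib

open Module

variable {H D : Type} [LieRing H] [LieAlgebra ℝ H] [FiniteDimensional ℝ H]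
  [LieRing D] [LieAlgebra ℝ D] [FiniteDimensional ℝ D]

/-- `beta BD π x y` is the element `β(x,y)` of `h*` given by `a ↦ ⟨π(a)x, y⟩_d`. -/
def beta (BD : LinearMap.BilinForm ℝ D) (π : H →ₗ[ℝ] D →ₗ[ℝ] D) (x y : D) : Dual ℝ H :=
  (BD.flip y).comp (π.flip x)

/-- The bracket on `G(d) = d ⊕ h*`: `[x₁+α₁, x₂+α₂] = [x₁,x₂]_d + β(x₁,x₂)`. -/
def gbr (BD : LinearMap.BilinForm ℝ D) (π : H →ₗ[ℝ] D →ₗ[ℝ] D)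
    (u v : D × Dual ℝ H) : D × Dual ℝ H :=
  (⁅u.1, v.1⁆, beta BD π u.1 v.1)

/-- The subspace spanned by all brackets `br u v`, `u ∈ S`, `v ∈ T`. -/
def bspan {X : Type} [AddCommGroup X] [Module ℝ X] (br : X → X → X)
    (S T : Submodule ℝ X) : Submodule ℝ X :=
  Submodule.span ℝ {z | ∃ u ∈ S, ∃ v ∈ T, z = br u v}

/-- The derived series: `C⁰(a) = a`, `Cⁱ(a) = [Cⁱ⁻¹(a), Cⁱ⁻¹(a)]`. -/
def dsF {X : Type} [AddCommGroup X] [Module ℝ X] (br : X → X → X) : ℕ → Submodule ℝ X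
  | 0 => ⊤
  | (i + 1) => bspan br (dsF br i) (dsF br i)

/-!
The first projection `G(d) → d` intertwines the two brackets and is onto, so it maps
`Cⁱ(G(d))` onto `Cⁱ(d)`; the `h*`-component of a bracket is `β`, which only depends on the
`d`-components. Hence once `Cᵏ(d) = 0`, `Cᵏ(G(d))` lies in `h*`, which brackets trivially with
everything, and brackets of elements of `C^{k-1}(G(d))` reduce to `β` on `C^{k-1}(d)`.
-/

section DerivedSeries

variable {X Y : Type} [AddCommGroup X] [Module ℝ X] [AddCommGroup Y] [Module ℝ Y]

lemma bspan_eq_bot_iff (br : X → X → X) (S T : Submodule ℝ X) :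
    bspan br S T = ⊥ ↔ ∀ u ∈ S, ∀ v ∈ T, br u v = 0 := by
  rw [bspan, Submodule.span_eq_bot]
  constructor
  · exact fun h u hu v hv => h _ ⟨u, hu, v, hv, rfl⟩
  · rintro h _ ⟨u, hu, v, hv, rfl⟩
    exact h u hu v hv

lemma dsF_succ_eq_bot_iff (br : X → X → X) (i : ℕ) :
    dsF br (i + 1) = ⊥ ↔ ∀ u ∈ dsF br i, ∀ v ∈ dsF br i, br u v = 0 :=
  bspan_eq_bot_iff br _ _

lemma map_bspan {br : X → X → X} {br' : Y → Y → Y} (f : X →ₗ[ℝ] Y)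
    (hf : ∀ u v, f (br u v) = br' (f u) (f v)) (S T : Submodule ℝ X) :
    (bspan br S T).map f = bspan br' (S.map f) (T.map f) := by
  rw [bspan, bspan, Submodule.map_span]
  congr 1
  ext z
  simp only [Set.mem_image, Set.mem_ofPred_eq, Submodule.mem_map]
  constructor
  · rintro ⟨_, ⟨u, hu, v, hv, rfl⟩, rfl⟩
    exact ⟨f u, ⟨u, hu, rfl⟩, f v, ⟨v, hv, rfl⟩, hf u v⟩
  · rintro ⟨_, ⟨u, hu, rfl⟩, _, ⟨v, hv, rfl⟩, rfl⟩
    exact ⟨br u v, ⟨u, hu, v, hv, rfl⟩, hf u v⟩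

lemma map_dsF_of_surjective {br : X → X → X} {br' : Y → Y → Y} (f : X →ₗ[ℝ] Y)
    (hf : ∀ u v, f (br u v) = br' (f u) (f v)) (hsurj : Function.Surjective f) :
    ∀ i, (dsF br i).map f = dsF br' i
  | 0 => by rw [dsF, dsF, Submodule.map_top, LinearMap.range_eq_top.2 hsurj]
  | i + 1 => by rw [dsF, dsF, map_bspan f hf, map_dsF_of_surjective f hf hsurj i]

end DerivedSeries

section DoubleExtension

variable {H D : Type} [LieRing H] [LieAlgebra ℝ H] [LieRing D] [LieAlgebra ℝ D]
  (BD : LinearMap.BilinForm ℝ D) (π : H →ₗ[ℝ] D →ₗ[ℝ] D)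

lemma beta_eq_zero_iff (x y : D) : beta BD π x y = 0 ↔ ∀ a, BD (π a x) y = 0 := by
  simp [beta, LinearMap.ext_iff]

lemma gbr_eq_zero_iff (u v : D × Dual ℝ H) :
    gbr BD π u v = 0 ↔ ⁅u.1, v.1⁆ = 0 ∧ beta BD π u.1 v.1 = 0 :=
  Prod.ext_iff

lemma gbr_eq_zero_of_fst_eq_zero {u : D × Dual ℝ H} (hu : u.1 = 0) (v : D × Dual ℝ H) :
    gbr BD π u v = 0 := by
  rw [gbr_eq_zero_iff, hu, zero_lie, beta_eq_zero_iff]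
  simp

lemma map_fst_dsF_gbr (i : ℕ) :
    (dsF (gbr BD π) i).map (LinearMap.fst ℝ D (Dual ℝ H)) = dsF (fun x y : D => ⁅x, y⁆) i :=
  map_dsF_of_surjective _ (fun _ _ => rfl) LinearMap.fst_surjective i

lemma fst_mem_dsF_of_mem_dsF_gbr {i : ℕ} {u : D × Dual ℝ H} (hu : u ∈ dsF (gbr BD π) i) :
    u.1 ∈ dsF (fun x y : D => ⁅x, y⁆) i :=
  map_fst_dsF_gbr BD π i ▸ Submodule.mem_map_of_mem hu

lemma dsF_gbr_succ_eq_bot_iff {m : ℕ} (hm : dsF (fun x y : D => ⁅x, y⁆) (m + 1) = ⊥) :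
    dsF (gbr BD π) (m + 1) = ⊥ ↔
      ∀ x ∈ dsF (fun x y : D => ⁅x, y⁆) m, ∀ y ∈ dsF (fun x y : D => ⁅x, y⁆) m,
        beta BD π x y = 0 := by
  have hbr : ∀ x ∈ dsF (fun x y : D => ⁅x, y⁆) m, ∀ y ∈ dsF (fun x y : D => ⁅x, y⁆) m,
      ⁅x, y⁆ = 0 := (dsF_succ_eq_bot_iff _ m).1 hm
  rw [dsF_succ_eq_bot_iff]
  constructor
  · intro h x hx y hy
    obtain ⟨u, hu, rfl⟩ := (map_fst_dsF_gbr BD π m).ge hx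
    obtain ⟨v, hv, rfl⟩ := (map_fst_dsF_gbr BD π m).ge hy
    exact ((gbr_eq_zero_iff BD π u v).1 (h u hu v hv)).2
  · intro h u hu v hv
    have hu₁ := fst_mem_dsF_of_mem_dsF_gbr BD π hu
    have hv₁ := fst_mem_dsF_of_mem_dsF_gbr BD π hv
    exact (gbr_eq_zero_iff BD π u v).2 ⟨hbr _ hu₁ _ hv₁, h _ hu₁ _ hv₁⟩

end DoubleExtension

theorem Gd_solvability_general
    (BD : LinearMap.BilinForm ℝ D)
    (π : H →ₗ[ℝ] D →ₗ[ℝ] D) :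
    -- (i) Cⁱ(G(d)) ⊆ Cⁱ(d) ⊕ h* for i ≥ 1
    (∀ i : ℕ, 1 ≤ i →
      dsF (gbr BD π) i ≤ (dsF (fun x y : D => ⁅x, y⁆) i).prod (⊤ : Submodule ℝ (Dual ℝ H))) ∧
    -- (ii) if Cᵏ(d) = 0 then C^{k+1}(G(d)) = 0
    (∀ k : ℕ, dsF (fun x y : D => ⁅x, y⁆) k = ⊥ → dsF (gbr BD π) (k + 1) = ⊥) ∧
    -- (iii) if Cᵏ(d) = 0 (k ≥ 1) then Cᵏ(G(d)) = 0 ↔ ⟨π(h)x,y⟩_d = 0 for all h ∈ h,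
    -- x, y ∈ C^{k-1}(d)
    (∀ k : ℕ, 1 ≤ k → dsF (fun x y : D => ⁅x, y⁆) k = ⊥ →
      (dsF (gbr BD π) k = ⊥ ↔
        ∀ a : H, ∀ x ∈ dsF (fun x y : D => ⁅x, y⁆) (k - 1),
          ∀ y ∈ dsF (fun x y : D => ⁅x, y⁆) (k - 1), BD (π a x) y = 0)) := by
  refine ⟨fun i _ u hu => ⟨fst_mem_dsF_of_mem_dsF_gbr BD π hu, trivial⟩, ?_, ?_⟩
  · intro k hk
    refine (dsF_succ_eq_bot_iff _ k).2 fun u hu v _ => gbr_eq_zero_of_fst_eq_zero BD π ?_ v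
    simpa only [hk, Submodule.mem_bot] using fst_mem_dsF_of_mem_dsF_gbr BD π hu
  · intro k hk1 hk
    obtain ⟨m, rfl⟩ := Nat.exists_eq_add_of_le' hk1
    rw [Nat.add_sub_cancel, dsF_gbr_succ_eq_bot_iff BD π hk]
    simp only [beta_eq_zero_iff]
    exact ⟨fun h a x hx y hy => h x hx y hy a, fun h x hx y hy a => h a x hx y hy⟩

/-- Solvability of `G(d)`: `Cⁱ(G(d)) ⊆ Cⁱ(d) ⊕ h*`; if `d` is `k`-step solvable then
`G(d)` is at most `(k+1)`-step solvable, and it is `k`-step solvable iff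
`⟨π(h)x, y⟩_d = 0` for all `h ∈ h` and `x, y ∈ C^{k-1}(d)`. -/
theorem Gd_solvability
    (BH : LinearMap.BilinForm ℝ H)
    (hBHsymm : ∀ a b : H, BH a b = BH b a)
    (hBHnd : BH.Nondegenerate)
    (hBHinv : ∀ a b c : H, BH ⁅a, b⁆ c = - BH b ⁅a, c⁆)
    (BD : LinearMap.BilinForm ℝ D)
    (hBDsymm : ∀ x y : D, BD x y = BD y x)
    (hBDnd : BD.Nondegenerate)
    (hBDinv : ∀ x y z : D, BD ⁅x, y⁆ z = - BD y ⁅x, z⁆)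
    (π : H →ₗ[ℝ] D →ₗ[ℝ] D)
    (hπder : ∀ a : H, ∀ x y : D, π a ⁅x, y⁆ = ⁅π a x, y⁆ + ⁅x, π a y⁆)
    (hπhom : ∀ a b : H, π ⁅a, b⁆ = π a ∘ₗ π b - π b ∘ₗ π a)
    (hπskew : ∀ a : H, ∀ x y : D, BD (π a x) y = - BD x (π a y)) :
    -- (i) Cⁱ(G(d)) ⊆ Cⁱ(d) ⊕ h* for i ≥ 1
    (∀ i : ℕ, 1 ≤ i →
      dsF (gbr BD π) i ≤ (dsF (fun x y : D => ⁅x, y⁆) i).prod (⊤ : Submodule ℝ (Dual ℝ H))) ∧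
    -- (ii) if Cᵏ(d) = 0 then C^{k+1}(G(d)) = 0
    (∀ k : ℕ, dsF (fun x y : D => ⁅x, y⁆) k = ⊥ → dsF (gbr BD π) (k + 1) = ⊥) ∧
    -- (iii) if Cᵏ(d) = 0 (k ≥ 1) then Cᵏ(G(d)) = 0 ↔ ⟨π(h)x,y⟩_d = 0 for all h ∈ h,
    -- x, y ∈ C^{k-1}(d)
    (∀ k : ℕ, 1 ≤ k → dsF (fun x y : D => ⁅x, y⁆) k = ⊥ →
      (dsF (gbr BD π) k = ⊥ ↔
        ∀ a : H, ∀ x ∈ dsF (fun x y : D => ⁅x, y⁆) (k - 1),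
          ∀ y ∈ dsF (fun x y : D => ⁅x, y⁆) (k - 1), BD (π a x) y = 0)) :=
  Gd_solvability_general BD π
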